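/- Fix distinct i, j ∈ {2, …, N}. Let h_i, h_j ∈ 𝓡 depend only on the variables v_{x^α} with α ≥ 1; set g_i := δh_i/δv_x, g_j := δh_j/δv_x, a_{ij} := Σ_{α≥0} v_{x^α t_j}·(δh_i/δv_{x^{α+1}}), a_{ji} := Σ_{α≥0} v_{x^α t_i}·(δh_j/δv_{x^{α+1}}), and suppose b_{ij}, b_{ji} ∈ 𝓡 satisfy D_x(b_{ij}) = D_x(g_i)·g_j and D_x(b_{ji}) = D_x(g_j)·g_i. Define L_{1i} := (1/2)v_x v_{t_i} − h_i, L_{ij} := (1/2)(v_{t_i}·g_j − v_{t_j}·g_i) + (a_{ij} − a_{ji}) − (1/2)(b_{ij} − b_{ji}), and L_{ji} := −L_{ij}. Then the following identities hold in 𝓡: (i) δ_{1i}L_{1i}/δv = −v_{x t_i} + D_x(g_i), so the multi-time Euler–Lagrange equation δ_{1i}L_{1i}/δv = 0 is the differentiated potential KdV equation v_{x t_i} = D_x(g_i); and (ii) δ_{1i}L_{1i}/δv_x − δ_{ij}L_{ji}/δv_{t_j} = (1/2)(v_{t_i} − g_i), so the multi-time Euler–Lagrange equation δ_{1i}L_{1i}/δv_x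 = δ_{ij}L_{ji}/δv_{t_j} is exactly the potential KdV equation v_{t_i} = g_i. -/

import Mathlib

open MvPolynomial

noncomputable section

/-- The ring `𝓡` of differential polynomials of a field `v` in independent variables
`t_1, …, t_N`: the polynomial ring over `ℝ` in commuting variables `v_I` indexed by
multi-indices `I : Fin N → ℕ`. -/
abbrev DiffPoly (N : ℕ) := MvPolynomial (Fin N → ℕ) ℝ

/-- The total derivative `D_m`, determined by `D_m (v_I) = v_{I + e_m}`. -/
noncomputable def totalDeriv {N : ℕ} (m : Fin N) :
    Derivation ℝ (DiffPoly N) (DiffPoly N) :=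
  MvPolynomial.mkDerivation ℝ fun I => X (I + Pi.single m 1)

/-- The x-variational derivative `δf/δv_I = Σ_α (−1)^α D_x^α (∂f/∂v_{I+α·e_x})`,
where `x` is the coordinate direction playing the role of `t_1`. -/
noncomputable def varDeriv {N : ℕ} (x : Fin N) (I : Fin N → ℕ) (f : DiffPoly N) :
    DiffPoly N :=
  ∑ᶠ α : ℕ, (-1 : ℝ) ^ α • (fun p => totalDeriv x p)^[α] (pderiv (I + α • Pi.single x 1) f)

/-- The (m,l)-variational derivative
`δ_{ml}f/δv_I = Σ_{α,β} (−1)^{α+β} D_m^α D_l^β (∂f/∂v_{I+α·e_m+β·e_l})`. -/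
noncomputable def varDeriv2 {N : ℕ} (m l : Fin N) (I : Fin N → ℕ) (f : DiffPoly N) :
    DiffPoly N :=
  ∑ᶠ α : ℕ, ∑ᶠ β : ℕ, (-1 : ℝ) ^ (α + β) •
    (fun p => totalDeriv m p)^[α] ((fun p => totalDeriv l p)^[β]
      (pderiv (I + α • Pi.single m 1 + β • Pi.single l 1) f))

/-- `g := δh/δv_x`, the variational derivative with respect to `v_x`. -/
noncomputable def gOf {N : ℕ} (x : Fin N) (h : DiffPoly N) : DiffPoly N :=
  varDeriv x (Pi.single x 1) h

/-- `a_{··} := Σ_α v_{x^α t_m} · (δh/δv_{x^{α+1}})`. -/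
noncomputable def aOf {N : ℕ} (x m : Fin N) (h : DiffPoly N) : DiffPoly N :=
  ∑ᶠ α : ℕ, X (α • Pi.single x 1 + Pi.single m 1) * varDeriv x ((α + 1) • Pi.single x 1) h

/-!
The quadratic part `½ v_x v_{t_i}` of `L_{1i}` contributes only through `∂/∂v_x` and
`∂/∂v_{t_i}`. Since `h_i` involves no `t`-derivatives, its `(1,i)`-variational derivatives are
its `x`-variational ones, and the recursion `δf/δv_I = ∂f/∂v_I − D_x (δf/δv_{I+e_x})` gives
`δh_i/δv = −D_x g_i`. In `L_{ij}` only `−½ v_{t_j} g_i` and the `α = 0` summand `v_{t_j} g_i` of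
`a_{ij}` depend on a `t_j`-derivative. The `b`'s contribute nothing: a polynomial whose `D_x`
involves only `x`-derivatives depends on no other jet variable, by downward induction on the
`x`-order using `[∂/∂v_{J+e_x}, D_x] = ∂/∂v_J`.
-/

open Function Filter

section MvPolynomial

variable {σ R : Type*} [CommSemiring R]

lemma MvPolynomial.hasFiniteSupport_pderiv_of_injective {ι : Type*} {e : ι → σ} (he : Injective e)
    (f : MvPolynomial σ R) : (fun a => pderiv (e a) f).HasFiniteSupport :=
  (f.vars.finite_toSet.preimage he.injOn).subset fun _ ha =>
    by_contra fun h => ha (pderiv_eq_zero_of_notMem_vars h)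

lemma MvPolynomial.pderiv_eq_zero_of_mem_supported {s : Set σ} {p : MvPolynomial σ R}
    (hp : p ∈ supported R s) {i : σ} (hi : i ∉ s) : pderiv i p = 0 :=
  pderiv_eq_zero_of_notMem_vars fun h => hi (mem_supported.1 hp h)

lemma Derivation.map_mem_supported {s : Set σ}
    (D : Derivation R (MvPolynomial σ R) (MvPolynomial σ R))
    (hD : ∀ k ∈ s, D (X k) ∈ supported R s) {p : MvPolynomial σ R} (hp : p ∈ supported R s) :
    D p ∈ supported R s := by
  rw [supported_eq_adjoin_X] at hp hD ⊢
  induction hp using Algebra.adjoin_induction with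
  | mem _ h => obtain ⟨k, hk, rfl⟩ := h; exact hD k hk
  | algebraMap r => rw [D.map_algebraMap]; exact zero_mem _
  | add _ _ _ _ ha hb => rw [map_add]; exact add_mem ha hb
  | mul a b ha' hb' ha hb =>
    rw [Derivation.leibniz, smul_eq_mul, smul_eq_mul]
    exact add_mem (mul_mem ha' hb) (mul_mem hb' ha)

lemma MvPolynomial.pderiv_mem_supported {s : Set σ} {p : MvPolynomial σ R}
    (hp : p ∈ supported R s) (i : σ) : pderiv i p ∈ supported R s := by
  classical
  refine (pderiv i).map_mem_supported (fun k _ => ?_) hp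
  rw [pderiv_X, Pi.single_apply]
  split_ifs
  exacts [one_mem _, zero_mem _]

lemma MvPolynomial.pderiv_X_mul_X_of_ne {a b J : σ} (ha : a ≠ J) (hb : b ≠ J) :
    pderiv J (X a * X b : MvPolynomial σ R) = 0 := by
  rw [pderiv_mul, pderiv_X_of_ne ha, pderiv_X_of_ne hb, mul_zero, zero_mul, add_zero]

end MvPolynomial

variable {N : ℕ}

lemma add_smul_single_injective (J : Fin N → ℕ) (m : Fin N) :
    Injective fun k : ℕ => J + k • (Pi.single m 1 : Fin N → ℕ) :=
  fun a b h => by simpa using congrFun h m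

lemma add_smul_single_add_smul_single_injective (I : Fin N → ℕ) {m l : Fin N} (hml : m ≠ l) :
    Injective fun p : ℕ × ℕ => I + p.1 • Pi.single m 1 + p.2 • Pi.single l 1 :=
  fun p q h => Prod.ext (by simpa [hml.symm] using congrFun h m) (by simpa [hml] using congrFun h l)

lemma eventually_pderiv_add_smul_single_eq_zero (J : Fin N → ℕ) (m : Fin N) (f : DiffPoly N) :
    ∀ᶠ k : ℕ in atTop, pderiv (J + k • (Pi.single m 1 : Fin N → ℕ)) f = 0 := by
  rw [← Nat.cofinite_eq_atTop]
  have hfin := hasFiniteSupport_pderiv_of_injective (add_smul_single_injective J m) f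
  simpa using hfin.eventually_cofinite_notMem

lemma finsum_nat_eq_add_finsum_succ {M : Type*} [AddCommMonoid M] {f : ℕ → M}
    (hf : f.HasFiniteSupport) : ∑ᶠ n, f n = f 0 + ∑ᶠ n, f (n + 1) := by
  obtain ⟨n, hn⟩ := hf.bddAbove
  have hsub : support f ⊆ Finset.range (n + 1) := fun k hk => by
    simpa [Nat.lt_succ_iff] using hn hk
  rw [finsum_eq_sum_of_support_subset f hsub,
    finsum_eq_sum_of_support_subset (s := Finset.range n) _ fun k hk => by
      simpa using hsub hk, Finset.sum_range_succ', add_comm]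

lemma totalDeriv_X (m : Fin N) (I : Fin N → ℕ) : totalDeriv m (X I) = X (I + Pi.single m 1) :=
  mkDerivation_X _ _ _

lemma pderiv_add_single_totalDeriv (J : Fin N → ℕ) (m : Fin N) (p : DiffPoly N) :
    pderiv (J + Pi.single m 1) (totalDeriv m p)
      = totalDeriv m (pderiv (J + Pi.single m 1) p) + pderiv J p := by
  classical
  have hcomm : ⁅(pderiv (J + Pi.single m 1) : Derivation ℝ (DiffPoly N) (DiffPoly N)),
      totalDeriv m⁆ = pderiv J := by
    refine derivation_ext fun I => ?_
    simp only [Derivation.commutator_apply, totalDeriv_X, pderiv_X, Pi.single_apply,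
      add_left_inj]
    split_ifs <;> simp
  have := congr($hcomm p)
  rw [Derivation.commutator_apply] at this
  linear_combination this

lemma totalDeriv_mem_supported {m : Fin N} {s : Set (Fin N → ℕ)}
    (hs : ∀ I ∈ s, I + Pi.single m 1 ∈ s) {p : DiffPoly N} (hp : p ∈ supported ℝ s) :
    totalDeriv m p ∈ supported ℝ s :=
  (totalDeriv m).map_mem_supported
    (fun I hI => by rw [totalDeriv_X]; exact X_mem_supported.2 (hs I hI)) hp

lemma iterate_totalDeriv_mem_supported {m : Fin N} {s : Set (Fin N → ℕ)}
    (hs : ∀ I ∈ s, I + Pi.single m 1 ∈ s) {p : DiffPoly N} (hp : p ∈ supported ℝ s) (k : ℕ) :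
    (fun q => totalDeriv m q)^[k] p ∈ supported ℝ s := by
  induction k generalizing p with
  | zero => exact hp
  | succ k ih => exact ih (totalDeriv_mem_supported hs hp)

lemma pderiv_eq_zero_of_totalDeriv_mem_supported {m : Fin N} {s : Set (Fin N → ℕ)}
    {q : DiffPoly N} (hq : totalDeriv m q ∈ supported ℝ s) {J : Fin N → ℕ}
    (hJ : ∀ k : ℕ, J + k • Pi.single m 1 ∉ s) : pderiv J q = 0 := by
  obtain ⟨n, hn⟩ := (eventually_pderiv_add_smul_single_eq_zero J m q).exists_forall_of_atTop
  have step (k : ℕ) (hk : pderiv (J + (k + 1) • Pi.single m 1) q = 0) :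
      pderiv (J + k • Pi.single m 1) q = 0 := by
    have := pderiv_add_single_totalDeriv (J + k • Pi.single m 1) m q
    rwa [add_assoc, ← succ_nsmul, pderiv_eq_zero_of_mem_supported hq (hJ _), hk, map_zero,
      zero_add, eq_comm] at this
  have below (d k : ℕ) (hk : k + d = n) : pderiv (J + k • Pi.single m 1) q = 0 := by
    induction d generalizing k with
    | zero => exact hn k hk.ge
    | succ d ih => exact step k (ih (k + 1) (by omega))
  simpa using below n 0 (zero_add n)

lemma varDeriv_mem_supported {x : Fin N} {s : Set (Fin N → ℕ)}
    (hs : ∀ I ∈ s, I + Pi.single x 1 ∈ s) {f : DiffPoly N} (hf : f ∈ supported ℝ s)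
    (I : Fin N → ℕ) : varDeriv x I f ∈ supported ℝ s :=
  finsum_induction (· ∈ supported ℝ s) (zero_mem _) (fun _ _ => add_mem) fun α =>
    Subalgebra.smul_mem _ (iterate_totalDeriv_mem_supported hs (pderiv_mem_supported hf _) α) _

lemma varDeriv_eq_zero {x : Fin N} {I : Fin N → ℕ} {f : DiffPoly N}
    (h : ∀ α : ℕ, pderiv (I + α • Pi.single x 1) f = 0) : varDeriv x I f = 0 :=
  finsum_eq_zero_of_forall_eq_zero fun α => by rw [h, iterate_map_zero, smul_zero]

lemma hasFiniteSupport_varDeriv_summand (x : Fin N) (I : Fin N → ℕ) (f : DiffPoly N) :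
    (fun α : ℕ => (-1 : ℝ) ^ α • (fun p => totalDeriv x p)^[α]
      (pderiv (I + α • Pi.single x 1) f)).HasFiniteSupport :=
  (hasFiniteSupport_pderiv_of_injective (add_smul_single_injective I x) f).subset fun α hα h =>
    hα (by simp only [h, iterate_map_zero, smul_zero])

lemma varDeriv_eq_pderiv_sub_totalDeriv (x : Fin N) (I : Fin N → ℕ) (f : DiffPoly N) :
    varDeriv x I f = pderiv I f - totalDeriv x (varDeriv x (I + Pi.single x 1) f) := by
  rw [varDeriv, finsum_nat_eq_add_finsum_succ (hasFiniteSupport_varDeriv_summand x I f),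
    varDeriv, map_finsum _ (hasFiniteSupport_varDeriv_summand x _ f), sub_eq_add_neg,
    ← finsum_neg_distrib]
  congr 1
  · simp
  · refine finsum_congr fun α => ?_
    rw [succ_nsmul', ← add_assoc, iterate_succ_apply', pow_succ', mul_smul, neg_one_smul,
      Derivation.map_smul]

def varDeriv2Term (m l : Fin N) (I : Fin N → ℕ) (f : DiffPoly N) (p : ℕ × ℕ) : DiffPoly N :=
  (-1 : ℝ) ^ (p.1 + p.2) • (fun q => totalDeriv m q)^[p.1] ((fun q => totalDeriv l q)^[p.2]
    (pderiv (I + p.1 • Pi.single m 1 + p.2 • Pi.single l 1) f))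

section VarDeriv2

variable {m l : Fin N} {I : Fin N → ℕ} {f : DiffPoly N}

lemma varDeriv2_eq_finsum_varDeriv2Term :
    varDeriv2 m l I f = ∑ᶠ α, ∑ᶠ β, varDeriv2Term m l I f (α, β) :=
  rfl

lemma varDeriv2Term_eq_zero {p : ℕ × ℕ}
    (h : pderiv (I + p.1 • Pi.single m 1 + p.2 • Pi.single l 1) f = 0) :
    varDeriv2Term m l I f p = 0 := by
  rw [varDeriv2Term, h, iterate_map_zero, iterate_map_zero, smul_zero]

lemma hasFiniteSupport_varDeriv2Term (hml : m ≠ l) : (varDeriv2Term m l I f).HasFiniteSupport :=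
  (hasFiniteSupport_pderiv_of_injective (add_smul_single_add_smul_single_injective I hml) f).subset
    fun _ hp h => hp (varDeriv2Term_eq_zero h)

lemma varDeriv2_eq_sum (s : Finset (ℕ × ℕ))
    (hs : ∀ p ∉ s, pderiv (I + p.1 • Pi.single m 1 + p.2 • Pi.single l 1) f = 0) :
    varDeriv2 m l I f = ∑ p ∈ s, varDeriv2Term m l I f p := by
  have hsupp : support (varDeriv2Term m l I f) ⊆ s := fun p hp =>
    by_contra fun h => hp (varDeriv2Term_eq_zero (hs p h))
  rw [varDeriv2_eq_finsum_varDeriv2Term, ← finsum_curry _ (s.finite_toSet.subset hsupp),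
    finsum_eq_sum_of_support_subset _ hsupp]

lemma varDeriv2_eq_pderiv
    (h : ∀ α β : ℕ, (α, β) ≠ (0, 0) →
      pderiv (I + α • Pi.single m 1 + β • Pi.single l 1) f = 0) :
    varDeriv2 m l I f = pderiv I f := by
  rw [varDeriv2_eq_sum {(0, 0)} fun p hp => h p.1 p.2 (by simpa using hp), Finset.sum_singleton]
  simp [varDeriv2Term]

lemma varDeriv2_eq_varDeriv
    (h : ∀ α β : ℕ, β ≠ 0 → pderiv (I + α • Pi.single m 1 + β • Pi.single l 1) f = 0) :
    varDeriv2 m l I f = varDeriv m I f := by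
  rw [varDeriv2_eq_finsum_varDeriv2Term, varDeriv]
  refine finsum_congr fun α => ?_
  rw [finsum_eq_single _ 0 fun β hβ => varDeriv2Term_eq_zero (p := (α, β)) (h α β hβ)]
  simp [varDeriv2Term]

lemma varDeriv2_sub (hml : m ≠ l) (g : DiffPoly N) :
    varDeriv2 m l I (f - g) = varDeriv2 m l I f - varDeriv2 m l I g := by
  simp only [varDeriv2_eq_finsum_varDeriv2Term,
    ← finsum_curry _ (hasFiniteSupport_varDeriv2Term hml)]
  rw [← finsum_sub_distrib (hasFiniteSupport_varDeriv2Term hml)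
    (hasFiniteSupport_varDeriv2Term hml)]
  refine finsum_congr fun p => ?_
  simp only [varDeriv2Term, map_sub, iterate_map_sub, smul_sub]

end VarDeriv2

def xDerivIndices (x : Fin N) : Set (Fin N → ℕ) :=
  {I | ∃ α : ℕ, 1 ≤ α ∧ I = α • Pi.single x 1}

/-- `L_{1i}` of the paper. -/
def lagrangianXT (x i : Fin N) (H : DiffPoly N) : DiffPoly N :=
  (1 / 2 : ℝ) • (X (Pi.single x 1) * X (Pi.single i 1)) - H

/-- `L_{ij}` of the paper, with `bij`, `bji` standing for `b_{ij}`, `b_{ji}`. -/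
def lagrangianTT (x i j : Fin N) (Hi Hj bij bji : DiffPoly N) : DiffPoly N :=
  (1 / 2 : ℝ) • (X (Pi.single i 1) * gOf x Hj - X (Pi.single j 1) * gOf x Hi)
    + (aOf x j Hi - aOf x i Hj) - (1 / 2 : ℝ) • (bij - bji)

section PotentialKdV

variable {x i j : Fin N} {H H' Hi Hj bij bji : DiffPoly N}

lemma add_single_mem_xDerivIndices {I : Fin N → ℕ} (hI : I ∈ xDerivIndices x) :
    I + Pi.single x 1 ∈ xDerivIndices x := by
  obtain ⟨α, hα, rfl⟩ := hI
  exact ⟨α + 1, by omega, (succ_nsmul _ _).symm⟩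

lemma notMem_xDerivIndices {J : Fin N → ℕ} {l : Fin N} (hl : l ≠ x) (hJ : J l ≠ 0) :
    J ∉ xDerivIndices x := by
  rintro ⟨α, -, rfl⟩
  simp [hl] at hJ

lemma zero_notMem_xDerivIndices : (0 : Fin N → ℕ) ∉ xDerivIndices x := by
  rintro ⟨α, hα, h⟩
  have := congrFun h x
  simp only [Pi.zero_apply, Pi.smul_apply, Pi.single_eq_same, smul_eq_mul, mul_one] at this
  omega

lemma mem_supported_xDerivIndices
    (hH : H ∈ Algebra.adjoin ℝ {p : DiffPoly N | ∃ α : ℕ, 1 ≤ α ∧ p = X (α • Pi.single x 1)}) :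
    H ∈ supported ℝ (xDerivIndices x) :=
  Algebra.adjoin_le (by rintro _ ⟨α, hα, rfl⟩; exact X_mem_supported.2 ⟨α, hα, rfl⟩) hH

lemma varDeriv_mem_supported_xDerivIndices (hH : H ∈ supported ℝ (xDerivIndices x))
    (I : Fin N → ℕ) : varDeriv x I H ∈ supported ℝ (xDerivIndices x) :=
  varDeriv_mem_supported (fun _ => add_single_mem_xDerivIndices) hH I

lemma totalDeriv_gOf_mul_gOf_mem_supported (hH : H ∈ supported ℝ (xDerivIndices x))
    (hH' : H' ∈ supported ℝ (xDerivIndices x)) :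
    totalDeriv x (gOf x H) * gOf x H' ∈ supported ℝ (xDerivIndices x) :=
  mul_mem (totalDeriv_mem_supported (fun _ => add_single_mem_xDerivIndices)
    (varDeriv_mem_supported_xDerivIndices hH _)) (varDeriv_mem_supported_xDerivIndices hH' _)

lemma varDeriv2_eq_varDeriv_of_mem_supported (hH : H ∈ supported ℝ (xDerivIndices x))
    (hi : i ≠ x) {I : Fin N → ℕ} (hI : I i = 0) : varDeriv2 x i I H = varDeriv x I H :=
  varDeriv2_eq_varDeriv fun α β hβ =>
    pderiv_eq_zero_of_mem_supported hH (notMem_xDerivIndices hi (by simp [hI, hi, hβ]))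

lemma varDeriv2_half_X_mul_X_zero (hi : i ≠ x) :
    varDeriv2 x i 0 ((1 / 2 : ℝ) • (X (Pi.single x 1) * X (Pi.single i 1)))
      = -X (Pi.single x 1 + Pi.single i 1) := by
  have hxi : (Pi.single x 1 : Fin N → ℕ) ≠ Pi.single i 1 := ne_of_apply_ne (· x) (by simp [hi])
  rw [varDeriv2_eq_sum {(1, 0), (0, 1)}]
  · rw [Finset.sum_pair (by simp)]
    simp [varDeriv2Term, pderiv_X_of_ne hxi, pderiv_X_of_ne hxi.symm, totalDeriv_X,
      add_comm (Pi.single i 1)]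
    module
  · rintro ⟨α, β⟩ hp
    have hαβ : ¬(α = 1 ∧ β = 0) ∧ ¬(α = 0 ∧ β = 1) := by simpa using hp
    rw [Derivation.map_smul, pderiv_X_mul_X_of_ne, smul_zero]
    all_goals
      intro h
      have h1 := congrFun h x
      have h2 := congrFun h i
      simp [hi, hi.symm] at h1 h2
      omega

lemma varDeriv2_half_X_mul_X_single (hi : i ≠ x) :
    varDeriv2 x i (Pi.single x 1) ((1 / 2 : ℝ) • (X (Pi.single x 1) * X (Pi.single i 1)))
      = (1 / 2 : ℝ) • X (Pi.single i 1) := by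
  have hxi : (Pi.single x 1 : Fin N → ℕ) ≠ Pi.single i 1 := ne_of_apply_ne (· x) (by simp [hi])
  rw [varDeriv2_eq_pderiv]
  · simp [pderiv_X_of_ne hxi.symm]
  · intro α β hp
    have hαβ : α ≠ 0 ∨ β ≠ 0 := by simpa [or_iff_not_imp_left] using hp
    rw [Derivation.map_smul, pderiv_X_mul_X_of_ne, smul_zero]
    all_goals
      intro h
      have h1 := congrFun h x
      have h2 := congrFun h i
      simp [hi, hi.symm] at h1 h2
      omega

lemma varDeriv2_lagrangianXT_zero (hi : i ≠ x) (hH : H ∈ supported ℝ (xDerivIndices x)) :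
    varDeriv2 x i 0 (lagrangianXT x i H)
      = -X (Pi.single x 1 + Pi.single i 1) + totalDeriv x (gOf x H) := by
  rw [lagrangianXT, varDeriv2_sub hi.symm, varDeriv2_half_X_mul_X_zero hi,
    varDeriv2_eq_varDeriv_of_mem_supported hH hi (Pi.zero_apply i),
    varDeriv_eq_pderiv_sub_totalDeriv,
    pderiv_eq_zero_of_mem_supported hH zero_notMem_xDerivIndices, zero_add, zero_sub,
    sub_neg_eq_add, gOf]

lemma varDeriv2_lagrangianXT_single (hi : i ≠ x) (hH : H ∈ supported ℝ (xDerivIndices x)) :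
    varDeriv2 x i (Pi.single x 1) (lagrangianXT x i H)
      = (1 / 2 : ℝ) • X (Pi.single i 1) - gOf x H := by
  rw [lagrangianXT, varDeriv2_sub hi.symm, varDeriv2_half_X_mul_X_single hi,
    varDeriv2_eq_varDeriv_of_mem_supported hH hi (by simp [hi]), gOf]

lemma hasFiniteSupport_aOf_summand (x m : Fin N) (H : DiffPoly N) :
    (fun γ : ℕ => X (γ • Pi.single x 1 + Pi.single m 1)
      * varDeriv x ((γ + 1) • Pi.single x 1) H).HasFiniteSupport := by
  obtain ⟨n, hn⟩ := (eventually_pderiv_add_smul_single_eq_zero 0 x H).exists_forall_of_atTop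
  refine (Set.finite_Iio n).subset fun γ hγ => Set.mem_Iio.2 (not_le.1 fun hnγ => hγ ?_)
  simp only
  rw [varDeriv_eq_zero fun α => ?_, mul_zero]
  rw [← add_smul, ← zero_add ((γ + 1 + α) • _)]
  exact hn _ (by omega)

lemma pderiv_aOf (m : Fin N) {J : Fin N → ℕ} (hJ : J x = 0)
    (hH : ∀ γ : ℕ, pderiv J (varDeriv x ((γ + 1) • Pi.single x 1) H) = 0) :
    pderiv J (aOf x m H) = if Pi.single m 1 = J then gOf x H else 0 := by
  classical
  rw [aOf, map_finsum _ (hasFiniteSupport_aOf_summand x m H), finsum_eq_single _ 0]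
  · rw [pderiv_mul, hH, mul_zero, add_zero, zero_smul, zero_add, zero_add, one_smul, pderiv_X,
      Pi.single_apply, gOf]
    split_ifs <;> simp
  · intro γ hγ
    rw [pderiv_mul, hH, mul_zero, add_zero, pderiv_X_of_ne, zero_mul]
    intro h
    have := congrFun h x
    simp [hJ, Pi.single_apply] at this
    omega

lemma pderiv_lagrangianTT (hj : j ≠ x) (hij : i ≠ j) (hHi : Hi ∈ supported ℝ (xDerivIndices x))
    (hHj : Hj ∈ supported ℝ (xDerivIndices x))
    (hbij : totalDeriv x bij ∈ supported ℝ (xDerivIndices x))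
    (hbji : totalDeriv x bji ∈ supported ℝ (xDerivIndices x))
    {J : Fin N → ℕ} (hJx : J x = 0) (hJj : J j ≠ 0) :
    pderiv J (lagrangianTT x i j Hi Hj bij bji)
      = if Pi.single j 1 = J then (1 / 2 : ℝ) • gOf x Hi else 0 := by
  have hJ : J ∉ xDerivIndices x := notMem_xDerivIndices hj hJj
  have hvar {H : DiffPoly N} (hH : H ∈ supported ℝ (xDerivIndices x)) (I : Fin N → ℕ) :
      pderiv J (varDeriv x I H) = 0 :=
    pderiv_eq_zero_of_mem_supported (varDeriv_mem_supported_xDerivIndices hH I) hJ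
  have hb : ∀ k : ℕ, J + k • Pi.single x 1 ∉ xDerivIndices x := fun k =>
    notMem_xDerivIndices hj (by simpa [hj] using hJj)
  have hei : Pi.single i 1 ≠ J := ne_of_apply_ne (· j) (by simpa [hij] using hJj.symm)
  rw [lagrangianTT, map_sub, map_add, Derivation.map_smul, Derivation.map_smul, map_sub, map_sub,
    map_sub, pderiv_aOf j hJx fun _ => hvar hHi _, pderiv_aOf i hJx fun _ => hvar hHj _,
    if_neg hei, pderiv_mul, pderiv_mul, gOf, gOf, hvar hHi, hvar hHj, pderiv_X_of_ne hei,
    pderiv_eq_zero_of_totalDeriv_mem_supported hbij hb,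
    pderiv_eq_zero_of_totalDeriv_mem_supported hbji hb, pderiv_X, Pi.single_apply]
  split_ifs <;> simp
  module

lemma varDeriv2_neg_lagrangianTT (hi : i ≠ x) (hj : j ≠ x) (hij : i ≠ j)
    (hHi : Hi ∈ supported ℝ (xDerivIndices x)) (hHj : Hj ∈ supported ℝ (xDerivIndices x))
    (hbij : totalDeriv x bij ∈ supported ℝ (xDerivIndices x))
    (hbji : totalDeriv x bji ∈ supported ℝ (xDerivIndices x)) :
    varDeriv2 i j (Pi.single j 1) (-lagrangianTT x i j Hi Hj bij bji)
      = -((1 / 2 : ℝ) • gOf x Hi) := by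
  rw [varDeriv2_eq_pderiv fun α β hαβ => ?_, map_neg,
    pderiv_lagrangianTT hj hij hHi hHj hbij hbji (by simp [hj.symm]) (by simp), if_pos rfl]
  rw [map_neg, pderiv_lagrangianTT hj hij hHi hHj hbij hbji (by simp [hi.symm, hj.symm])
    (by simp [hij.symm]), if_neg, neg_zero]
  intro h
  have h1 := congrFun h i
  have h2 := congrFun h j
  simp [hij, hij.symm] at h1 h2
  exact hαβ (by rw [← h1, h2])

end PotentialKdV

/-- (i) `δ_{1i}L_{1i}/δv = −v_{x t_i} + D_x(g_i)`, so the multi-time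
Euler–Lagrange equation `δ_{1i}L_{1i}/δv = 0` is the differentiated potential KdV equation;
(ii) `δ_{1i}L_{1i}/δv_x − δ_{ij}L_{ji}/δv_{t_j} = ½(v_{t_i} − g_i)`, so the multi-time
Euler–Lagrange equation `δ_{1i}L_{1i}/δv_x = δ_{ij}L_{ji}/δv_{t_j}` is exactly the potential
KdV equation `v_{t_i} = g_i`. -/
theorem stmt_16 (N : ℕ) (x : Fin N)
    (i j : Fin N) (hi : i ≠ x) (hj : j ≠ x) (hij : i ≠ j)
    (Hi Hj : DiffPoly N)
    (hdepi : Hi ∈ Algebra.adjoin ℝ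
      {p : DiffPoly N | ∃ α : ℕ, 1 ≤ α ∧ p = X (α • Pi.single x 1)})
    (hdepj : Hj ∈ Algebra.adjoin ℝ
      {p : DiffPoly N | ∃ α : ℕ, 1 ≤ α ∧ p = X (α • Pi.single x 1)})
    (bij bji : DiffPoly N)
    (hbij : totalDeriv x bij = totalDeriv x (gOf x Hi) * gOf x Hj)
    (hbji : totalDeriv x bji = totalDeriv x (gOf x Hj) * gOf x Hi) :
    varDeriv2 x i 0 ((1 / 2 : ℝ) • (X (Pi.single x 1) * X (Pi.single i 1)) - Hi)
        = -X (Pi.single x 1 + Pi.single i 1) + totalDeriv x (gOf x Hi)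
    ∧
    varDeriv2 x i (Pi.single x 1)
          ((1 / 2 : ℝ) • (X (Pi.single x 1) * X (Pi.single i 1)) - Hi)
        - varDeriv2 i j (Pi.single j 1)
            (-((1 / 2 : ℝ) •
                (X (Pi.single i 1) * gOf x Hj - X (Pi.single j 1) * gOf x Hi)
              + (aOf x j Hi - aOf x i Hj) - (1 / 2 : ℝ) • (bij - bji)))
      = (1 / 2 : ℝ) • (X (Pi.single i 1) - gOf x Hi) := by
  have hHi := mem_supported_xDerivIndices hdepi
  have hHj := mem_supported_xDerivIndices hdepj
  refine ⟨varDeriv2_lagrangianXT_zero hi hHi, ?_⟩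
  have hLji := varDeriv2_neg_lagrangianTT hi hj hij hHi hHj
    (hbij ▸ totalDeriv_gOf_mul_gOf_mem_supported hHi hHj)
    (hbji ▸ totalDeriv_gOf_mul_gOf_mem_supported hHj hHi)
  exact (congrArg₂ (· - ·) (varDeriv2_lagrangianXT_single hi hHi) hLji).trans (by module)
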